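/- Let $G$ be a finite undirected graph with $n$ vertices, all in one connected component, and let $u, v, x$ be vertices with $uv \notin E(G)$. Suppose adding the edge $uv$ decreases the quantity $\sum_{w} \mathrm{dist}(u, w)$ by $s$, where $s > n \cdot \mathrm{dist}(u, x)$. Then adding the edge $xv$ to $G$ decreases $\sum_w \mathrm{dist}(x, w)$ by at least $s - n \cdot \mathrm{dist}(u, x)$. -/

import Mathlib

/-!
In `G + ab` a shortest path from `a` either avoids the new edge or starts with it, so
`dist_{G+ab}(a, w) = min (dist_G(a, w), dist_G(b, w) + 1)`. Hence the decrease at `w` caused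
by adding `uv` is `max (0, dist(u, w) - dist(v, w) - 1)`, and since
`dist(u, w) ≤ dist(u, x) + dist(x, w)` it exceeds the decrease at `w` caused by adding `xv`
by at most `dist(u, x)`. Summing over the `n` vertices `w` gives the claim.
-/

open Finset

namespace SimpleGraph

variable {V : Type*} {G : SimpleGraph V} {a b c w : V}

lemma Adj.dist_le_dist_add_one (h : G.Adj a b) (w : V) : G.dist a w ≤ G.dist b w + 1 := by
  rw [dist_comm, dist_comm (u := b)]
  rcases h.symm.diff_dist_adj (u := w) with h | h | h <;> omega

/-- A walk in `G + ab` either avoids the new edge or passes through it in one direction. -/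
lemma Walk.min_dist_le_length_of_sup_edge :
    ∀ {c : V} (p : (G ⊔ edge a b).Walk c w),
      min (G.dist c w) (min (G.dist c a + 1 + G.dist b w) (G.dist c b + 1 + G.dist a w))
        ≤ p.length
  | _, .nil => by simp
  | c, .cons (v := d) hcd p => by
    have ih := min_dist_le_length_of_sup_edge p
    rw [Walk.length_cons]
    rcases hcd with hcd | hcd
    · have := hcd.dist_le_dist_add_one w
      have := hcd.dist_le_dist_add_one a
      have := hcd.dist_le_dist_add_one b
      omega
    · rcases (edge_adj a b c d).1 hcd with ⟨⟨rfl, rfl⟩ | ⟨rfl, rfl⟩, -⟩ <;>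
        simp only [dist_self] at ih ⊢ <;> omega

lemma min_dist_le_dist_sup_edge :
    min (G.dist a w) (G.dist b w + 1) ≤ (G ⊔ edge a b).dist a w := by
  by_cases hr : (G ⊔ edge a b).Reachable a w
  · obtain ⟨p, hp⟩ := hr.exists_walk_length_eq_dist
    have := p.min_dist_le_length_of_sup_edge
    simp only [dist_self] at this
    omega
  · have : ¬G.Reachable a w := fun h => hr (h.mono le_sup_left)
    simp [dist_eq_zero_of_not_reachable this]

lemma Reachable.dist_sup_edge_le (h : G.Reachable b w) :
    (G ⊔ edge a b).dist a w ≤ G.dist b w + 1 := by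
  obtain ⟨q, hq⟩ := h.exists_walk_length_eq_dist
  by_cases hab : a = b
  · subst hab
    have := (h.dist_anti (le_sup_left : G ≤ G ⊔ edge a a))
    omega
  · have hadj : (G ⊔ edge a b).Adj a b := Or.inr ((edge_adj a b a b).2 ⟨.inl ⟨rfl, rfl⟩, hab⟩)
    calc (G ⊔ edge a b).dist a w ≤ (Walk.cons hadj (q.mapLe le_sup_left)).length := dist_le _
      _ = G.dist b w + 1 := by simp [hq]

lemma Connected.dist_sup_edge (hG : G.Connected) (a b w : V) :
    (G ⊔ edge a b).dist a w = min (G.dist a w) (G.dist b w + 1) :=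
  le_antisymm
    (le_min ((hG a w).dist_anti le_sup_left) (hG b w).dist_sup_edge_le)
    min_dist_le_dist_sup_edge

lemma Connected.dist_sub_dist_sup_edge_le (hG : G.Connected) (u x v w : V) :
    (G.dist u w : ℤ) - (G ⊔ edge u v).dist u w - G.dist u x
      ≤ (G.dist x w : ℤ) - (G ⊔ edge x v).dist x w := by
  rw [hG.dist_sup_edge, hG.dist_sup_edge]
  have : G.dist u w ≤ G.dist u x + G.dist x w := hG.dist_triangle
  omega

end SimpleGraph

theorem stmt_7_general (n : ℕ) (G : SimpleGraph (Fin n)) (hconn : G.Connected)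
    (u v x : Fin n) (s : ℤ)
    (hs : (∑ w : Fin n, (G.dist u w : ℤ))
        - (∑ w : Fin n, ((G ⊔ SimpleGraph.fromEdgeSet {s(u, v)}).dist u w : ℤ)) = s) :
    (∑ w : Fin n, (G.dist x w : ℤ))
        - (∑ w : Fin n, ((G ⊔ SimpleGraph.fromEdgeSet {s(x, v)}).dist x w : ℤ))
      ≥ s - (n : ℤ) * (G.dist u x : ℤ) := by
  have hsum := Finset.sum_le_sum fun w (_ : w ∈ univ) =>
    hconn.dist_sub_dist_sup_edge_le u x v w
  simp only [SimpleGraph.edge, sum_sub_distrib, sum_const, card_univ, Fintype.card_fin,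
    nsmul_eq_mul] at hsum
  linarith

/-- Friend-decrease lemma: if adding edge `uv` decreases the total distance from `u`
by `s > n·dist(u,x)`, then adding edge `xv` decreases the total distance from `x`
by at least `s - n·dist(u,x)`. -/
theorem stmt_7 (n : ℕ) (G : SimpleGraph (Fin n)) (hconn : G.Connected)
    (u v x : Fin n) (huv : ¬ G.Adj u v) (s : ℤ)
    (hs : (∑ w : Fin n, (G.dist u w : ℤ))
        - (∑ w : Fin n, ((G ⊔ SimpleGraph.fromEdgeSet {s(u, v)}).dist u w : ℤ)) = s)
    (hbig : s > (n : ℤ) * (G.dist u x : ℤ)) :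
    (∑ w : Fin n, (G.dist x w : ℤ))
        - (∑ w : Fin n, ((G ⊔ SimpleGraph.fromEdgeSet {s(x, v)}).dist x w : ℤ))
      ≥ s - (n : ℤ) * (G.dist u x : ℤ) :=
  stmt_7_general n G hconn u v x s hs
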